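/- arXiv:1911.04082 — 3 statements merged into one kernel-verified Lean document; each statement's English description precedes it below -/
import Mathlib

section
/- Let u_min < 0, γ > 0, φ ≥ 0, h > 0 and w ≥ 0 be reals, let T_k and T_i be reals with T_i ≥ T_k + h, and let p_k, v_k : ℝ → ℝ be such that p_k is differentiable on [T_k, T_i] with p_k'(t) = v_k(t) there, v_k is differentiable on [T_k, T_i] with v_k'(t) ≥ u_min for all t there, and v_k(t) ≥ 0 for all t in [T_k, T_i]. If (1/2)·u_min·h^2 + v_k(T_k)·h − φ·w − γ > 0, then p_k(T_i) − p_k(T_k) > γ + φ·w. -/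
/-!
Since the leader's acceleration is at least `u_min`, comparing its position with the
constant-deceleration trajectory gives `p_k (T_k + h) - p_k T_k ≥ v_k T_k * h + u_min * h ^ 2 / 2`,
and since its speed is nonnegative, its position does not decrease between `T_k + h` and `T_i`.
-/

open Set

namespace Kinematics

variable {a b : ℝ}

theorem monotoneOn_Icc_of_hasDerivAt_nonneg {f f' : ℝ → ℝ}
    (hf : ∀ t ∈ Icc a b, HasDerivAt f (f' t) t) (hf' : ∀ t ∈ Icc a b, 0 ≤ f' t) :
    MonotoneOn f (Icc a b) :=
  monotoneOn_of_hasDerivWithinAt_nonneg (convex_Icc a b)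
    (fun t ht => (hf t ht).continuousAt.continuousWithinAt)
    (fun t ht => (hf t (interior_subset ht)).hasDerivWithinAt)
    (fun t ht => hf' t (interior_subset ht))

theorem sub_le_sub_of_hasDerivAt_le {f g f' g' : ℝ → ℝ}
    (hf : ∀ t ∈ Icc a b, HasDerivAt f (f' t) t) (hg : ∀ t ∈ Icc a b, HasDerivAt g (g' t) t)
    (hle : ∀ t ∈ Icc a b, g' t ≤ f' t) (hab : a ≤ b) :
    g b - g a ≤ f b - f a := by
  have hmono : MonotoneOn (fun t => f t - g t) (Icc a b) :=
    monotoneOn_Icc_of_hasDerivAt_nonneg (fun t ht => (hf t ht).sub (hg t ht))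
      (fun t ht => sub_nonneg.2 (hle t ht))
  have := hmono (left_mem_Icc.2 hab) (right_mem_Icc.2 hab) hab
  linarith

variable {p v v' : ℝ → ℝ} {u : ℝ}

theorem velocity_ge_of_accel_ge (hv : ∀ t ∈ Icc a b, HasDerivAt v (v' t) t)
    (hu : ∀ t ∈ Icc a b, u ≤ v' t) {t : ℝ} (ht : t ∈ Icc a b) :
    v a + u * (t - a) ≤ v t := by
  have hsub : Icc a t ⊆ Icc a b := Icc_subset_Icc_right ht.2
  have := sub_le_sub_of_hasDerivAt_le (fun s hs => hv s (hsub hs))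
    (fun s _ => hasDerivAt_mul_const u) (fun s hs => hu s (hsub hs)) ht.1
  linarith

theorem displacement_ge_of_accel_ge (hp : ∀ t ∈ Icc a b, HasDerivAt p (v t) t)
    (hv : ∀ t ∈ Icc a b, HasDerivAt v (v' t) t) (hu : ∀ t ∈ Icc a b, u ≤ v' t)
    {t : ℝ} (ht : t ∈ Icc a b) :
    v a * (t - a) + u / 2 * (t - a) ^ 2 ≤ p t - p a := by
  have hsub : Icc a t ⊆ Icc a b := Icc_subset_Icc_right ht.2
  have hquad (s : ℝ) : HasDerivAt (fun s => v a * s + u / 2 * (s - a) ^ 2)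
      (v a + u * (s - a)) s := by
    refine (((hasDerivAt_id' s).const_mul (v a)).add
      ((((hasDerivAt_id' s).sub_const a).pow 2).const_mul (u / 2))).congr_deriv ?_
    ring
  have := sub_le_sub_of_hasDerivAt_le (fun s hs => hp s (hsub hs)) (fun s _ => hquad s)
    (fun s hs => velocity_ge_of_accel_ge hv hu (hsub hs)) ht.1
  linarith

end Kinematics

theorem stmt_9_general
    (u_min γ φ h w : ℝ)
    (hh : 0 < h)
    (T_k T_i : ℝ) (hTi : T_k + h ≤ T_i)
    (p_k v_k : ℝ → ℝ)
    (hp : ∀ t ∈ Set.Icc T_k T_i, HasDerivAt p_k (v_k t) t)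
    (hvdiff : ∀ t ∈ Set.Icc T_k T_i, DifferentiableAt ℝ v_k t)
    (hu : ∀ t ∈ Set.Icc T_k T_i, u_min ≤ deriv v_k t)
    (hvnn : ∀ t ∈ Set.Icc T_k T_i, 0 ≤ v_k t)
    (hcond : (1 / 2) * u_min * h ^ 2 + v_k T_k * h - φ * w - γ > 0) :
    p_k T_i - p_k T_k > γ + φ * w := by
  have hmid : T_k + h ∈ Icc T_k T_i := ⟨by linarith, hTi⟩
  have hdisp := Kinematics.displacement_ge_of_accel_ge hp
    (fun t ht => (hvdiff t ht).hasDerivAt) hu hmid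
  have hrest : p_k (T_k + h) ≤ p_k T_i :=
    Kinematics.monotoneOn_Icc_of_hasDerivAt_nonneg hp hvnn hmid
      (right_mem_Icc.2 (by linarith)) hTi
  rw [add_sub_cancel_left] at hdisp
  linarith

/-- Lemma 6: the rear-end safety constraint does not become active at the entry of
a zone if the minimum time headway h satisfies
(1/2)·u_min·h² + v_k(T_k)·h − φ·w − γ > 0. -/
theorem stmt_9
    (u_min γ φ h w : ℝ) (hmin : u_min < 0) (hγ : 0 < γ) (hφ : 0 ≤ φ)
    (hh : 0 < h) (hw : 0 ≤ w)
    (T_k T_i : ℝ) (hTi : T_k + h ≤ T_i)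
    (p_k v_k : ℝ → ℝ)
    (hp : ∀ t ∈ Set.Icc T_k T_i, HasDerivAt p_k (v_k t) t)
    (hvdiff : ∀ t ∈ Set.Icc T_k T_i, DifferentiableAt ℝ v_k t)
    (hu : ∀ t ∈ Set.Icc T_k T_i, u_min ≤ deriv v_k t)
    (hvnn : ∀ t ∈ Set.Icc T_k T_i, 0 ≤ v_k t)
    (hcond : (1 / 2) * u_min * h ^ 2 + v_k T_k * h - φ * w - γ > 0) :
    p_k T_i - p_k T_k > γ + φ * w :=
  stmt_9_general u_min γ φ h w hh T_k T_i hTi p_k v_k hp hvdiff hu hvnn hcond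
end

section
/- Let u_max > 0 > u_min be reals and let p_s, v_s, p_e, v_e be reals with v_s ≥ 0, v_e ≥ 0 and p_e > p_s. Define p_c = (v_e^2 − v_s^2 + 2(u_max·p_s − u_min·p_e)) / (2(u_max − u_min)), suppose v_s^2 + 2·u_max·(p_c − p_s) ≥ 0, set v_c = sqrt(v_s^2 + 2·u_max·(p_c − p_s)), and suppose v_c ≥ v_s and v_c ≥ v_e. Let R = (v_c − v_s)/u_max + (v_e − v_c)/u_min. Then for all reals t_s < t_e and all functions p, v : ℝ → ℝ such that p is differentiable on [t_s, t_e] with p'(t) = v(t) there, v is differentiable on [t_s, t_e] with u_min ≤ v'(t) ≤ u_max for all t there, p(t_s) = p_s, v(t_s) = v_s, p(t_e) = p_e and v(t_e) = v_e, one has t_e − t_s ≥ R. -/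
/-!
Since `u_min ≤ v' ≤ u_max`, the speed stays below both lines `v_s + u_max (t - t_s)` and
`v_e + u_min (t - t_e)`. Comparing `p` with the antiderivatives of the first line before an
instant `m` and of the second after it bounds `p_e - p_s` by `envelopeDist` of the two phase
durations. The bang-bang profile through `v_c` covers exactly `p_e - p_s` in time `R`, and
`envelopeDist` is strictly increasing in both durations, so a horizon shorter than `R` cannot
cover that distance.
-/

open Set

lemma sub_le_sub_of_hasDerivAt_le {f g f' g' : ℝ → ℝ} {a b : ℝ} (hab : a ≤ b)
    (hf : ∀ t ∈ Icc a b, HasDerivAt f (f' t) t) (hg : ∀ t ∈ Icc a b, HasDerivAt g (g' t) t)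
    (hle : ∀ t ∈ Ioo a b, f' t ≤ g' t) : f b - f a ≤ g b - g a := by
  have hmono : MonotoneOn (fun t => g t - f t) (Icc a b) := by
    refine monotoneOn_of_hasDerivWithinAt_nonneg (convex_Icc a b)
      (fun t ht => ((hg t ht).sub (hf t ht)).continuousAt.continuousWithinAt)
      (fun t ht => ((hg t (interior_subset ht)).sub (hf t (interior_subset ht))).hasDerivWithinAt)
      (fun t ht => sub_nonneg.mpr (hle t (by rwa [interior_Icc] at ht)))
  have := hmono (left_mem_Icc.mpr hab) (right_mem_Icc.mpr hab) hab
  simp only at this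
  linarith

/-- Distance covered in time `x` from speed `v₀` at acceleration `a`, plus the distance covered
in a final time `y` ending at speed `v₁` under acceleration `b`; the two phases need not meet at
a common speed. -/
noncomputable def envelopeDist (a b v₀ v₁ x y : ℝ) : ℝ :=
  v₀ * x + a * x ^ 2 / 2 + (v₁ * y - b * y ^ 2 / 2)

lemma envelopeDist_lt_envelopeDist {a b v₀ v₁ x y x' y' : ℝ} (ha : 0 < a) (hb : b < 0)
    (hv₀ : 0 ≤ v₀) (hv₁ : 0 ≤ v₁) (hx : 0 ≤ x) (hy : 0 ≤ y) (hxx' : x ≤ x') (hyy' : y ≤ y')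
    (hlt : x < x' ∨ y < y') : envelopeDist a b v₀ v₁ x y < envelopeDist a b v₀ v₁ x' y' := by
  unfold envelopeDist
  have hx2 := mul_le_mul hxx' hxx' hx (hx.trans hxx')
  have hy2 := mul_le_mul hyy' hyy' hy (hy.trans hyy')
  rcases hlt with h | h
  · nlinarith [mul_lt_mul'' h h hx hx]
  · nlinarith [mul_lt_mul'' h h hy hy]

lemma envelopeDist_of_switchSpeed {a b v₀ v₁ : ℝ} (c : ℝ) (ha : a ≠ 0) (hb : b ≠ 0) :
    envelopeDist a b v₀ v₁ ((c - v₀) / a) ((v₁ - c) / b) =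
      (c ^ 2 - v₀ ^ 2) / (2 * a) + (v₁ ^ 2 - c ^ 2) / (2 * b) := by
  unfold envelopeDist
  field_simp
  ring

lemma hasDerivAt_uniformAccel (t₀ v₀ a t : ℝ) :
    HasDerivAt (fun t => v₀ * (t - t₀) + a * (t - t₀) ^ 2 / 2) (v₀ + a * (t - t₀)) t := by
  have h := (hasDerivAt_id' t).sub_const t₀
  exact ((h.const_mul v₀).add ((h.fun_pow 2).const_mul a |>.div_const 2)).congr_deriv (by ring)

lemma sub_le_envelopeDist {a b t₀ t₁ m : ℝ} {p v : ℝ → ℝ}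
    (hp : ∀ t ∈ Icc t₀ t₁, HasDerivAt p (v t) t) (hv : ∀ t ∈ Icc t₀ t₁, DifferentiableAt ℝ v t)
    (hacc : ∀ t ∈ Icc t₀ t₁, b ≤ deriv v t ∧ deriv v t ≤ a) (hm : m ∈ Icc t₀ t₁) :
    p t₁ - p t₀ ≤ envelopeDist a b (v t₀) (v t₁) (m - t₀) (t₁ - m) := by
  have hv' : ∀ t ∈ Icc t₀ t₁, HasDerivAt v (deriv v t) t := fun t ht => (hv t ht).hasDerivAt
  have hup : ∀ t ∈ Icc t₀ m, v t ≤ v t₀ + a * (t - t₀) := by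
    intro t ht
    have htm : t ≤ t₁ := ht.2.trans hm.2
    have := sub_le_sub_of_hasDerivAt_le ht.1 (fun s hs => hv' s ⟨hs.1, hs.2.trans htm⟩)
      (fun s _ => hasDerivAt_mul_const a) (fun s hs => (hacc s ⟨hs.1.le, hs.2.le.trans htm⟩).2)
    linarith
  have hdown : ∀ t ∈ Icc m t₁, v t ≤ v t₁ + b * (t - t₁) := by
    intro t ht
    have htm : t₀ ≤ t := hm.1.trans ht.1
    have := sub_le_sub_of_hasDerivAt_le ht.2 (fun s _ => hasDerivAt_mul_const b)
      (fun s hs => hv' s ⟨htm.trans hs.1, hs.2⟩)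
      (fun s hs => (hacc s ⟨htm.trans hs.1.le, hs.2.le⟩).1)
    linarith
  have hfirst := sub_le_sub_of_hasDerivAt_le hm.1 (fun t ht => hp t ⟨ht.1, ht.2.trans hm.2⟩)
    (g := fun t => v t₀ * (t - t₀) + a * (t - t₀) ^ 2 / 2)
    (fun t _ => hasDerivAt_uniformAccel t₀ (v t₀) a t)
    (fun t ht => hup t (Ioo_subset_Icc_self ht))
  have hsecond := sub_le_sub_of_hasDerivAt_le hm.2 (fun t ht => hp t ⟨hm.1.trans ht.1, ht.2⟩)
    (g := fun t => v t₁ * (t - t₁) + b * (t - t₁) ^ 2 / 2)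
    (fun t _ => hasDerivAt_uniformAccel t₁ (v t₁) b t)
    (fun t ht => hdown t (Ioo_subset_Icc_self ht))
  unfold envelopeDist
  simp only [sub_self] at hfirst hsecond
  linarith

lemma sub_eq_of_switchingPoint {a b p₀ v₀ p₁ v₁ p_c v_c : ℝ} (ha : a ≠ 0) (hb : b ≠ 0)
    (hab : a ≠ b) (hpc : p_c = (v₁ ^ 2 - v₀ ^ 2 + 2 * (a * p₀ - b * p₁)) / (2 * (a - b)))
    (hvc : v_c ^ 2 = v₀ ^ 2 + 2 * a * (p_c - p₀)) :
    p₁ - p₀ = (v_c ^ 2 - v₀ ^ 2) / (2 * a) + (v₁ ^ 2 - v_c ^ 2) / (2 * b) := by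
  rw [hvc, hpc]
  field_simp [sub_ne_zero.mpr hab]
  ring

theorem stmt_10_general
    (u_max u_min : ℝ) (hmax : 0 < u_max) (hmin : u_min < 0)
    (p_s v_s p_e v_e : ℝ) (hvs : 0 ≤ v_s) (hve : 0 ≤ v_e)
    (p_c v_c R : ℝ)
    (hpc : p_c = (v_e ^ 2 - v_s ^ 2 + 2 * (u_max * p_s - u_min * p_e)) /
      (2 * (u_max - u_min)))
    (hnn : 0 ≤ v_s ^ 2 + 2 * u_max * (p_c - p_s))
    (hvc : v_c = Real.sqrt (v_s ^ 2 + 2 * u_max * (p_c - p_s)))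
    (hvcs : v_s ≤ v_c) (hvce : v_e ≤ v_c)
    (hR : R = (v_c - v_s) / u_max + (v_e - v_c) / u_min) :
    ∀ (t_s t_e : ℝ), t_s < t_e →
      ∀ (p v : ℝ → ℝ),
        (∀ t ∈ Set.Icc t_s t_e, HasDerivAt p (v t) t) →
        (∀ t ∈ Set.Icc t_s t_e, DifferentiableAt ℝ v t) →
        (∀ t ∈ Set.Icc t_s t_e, u_min ≤ deriv v t ∧ deriv v t ≤ u_max) →
        p t_s = p_s → v t_s = v_s → p t_e = p_e → v t_e = v_e →
        t_e - t_s ≥ R := by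
  intro t_s t_e hts p v hp hv hacc hpts hvts hpte hvte
  by_contra! hT
  set x_c := (v_c - v_s) / u_max
  set y_c := (v_e - v_c) / u_min
  have hx_c : 0 ≤ x_c := div_nonneg (sub_nonneg.2 hvcs) hmax.le
  have hy_c : 0 ≤ y_c := div_nonneg_of_nonpos (sub_nonpos.2 hvce) hmin.le
  have hdist : envelopeDist u_max u_min v_s v_e x_c y_c = p_e - p_s := by
    rw [envelopeDist_of_switchSpeed v_c hmax.ne' hmin.ne, sub_eq_of_switchingPoint hmax.ne' hmin.ne
      (hmin.trans hmax).ne' hpc (hvc ▸ Real.sq_sqrt hnn)]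
  have hreach : ∀ x ∈ Icc 0 (t_e - t_s),
      p_e - p_s ≤ envelopeDist u_max u_min v_s v_e x (t_e - t_s - x) := by
    intro x hx
    have := sub_le_envelopeDist hp hv hacc (m := t_s + x)
      ⟨by linarith [hx.1], by linarith [hx.2]⟩
    rwa [hpts, hpte, hvts, hvte, add_sub_cancel_left, sub_add_eq_sub_sub] at this
  rcases lt_or_ge (t_e - t_s) x_c with h | h
  · have hbound := hreach (t_e - t_s) ⟨sub_nonneg.2 hts.le, le_rfl⟩
    have hlt := envelopeDist_lt_envelopeDist hmax hmin hvs hve (sub_nonneg.2 hts.le)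
      le_rfl h.le hy_c (Or.inl h)
    rw [sub_self] at hbound
    linarith
  · have hbound := hreach x_c ⟨hx_c, h⟩
    have hlt := envelopeDist_lt_envelopeDist (y' := y_c) hmax hmin hvs hve hx_c (sub_nonneg.2 h)
      le_rfl (by linarith) (Or.inr (by linarith))
    linarith

/-- Release time problem (Problem 2, Lemmas 1–2, Proposition 1): R is a lower
bound on the travel time of every admissible trajectory through the zone with
the given boundary states. -/
theorem stmt_10
    (u_max u_min : ℝ) (hmax : 0 < u_max) (hmin : u_min < 0)
    (p_s v_s p_e v_e : ℝ) (hvs : 0 ≤ v_s) (hve : 0 ≤ v_e) (hpe : p_s < p_e)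
    (p_c v_c R : ℝ)
    (hpc : p_c = (v_e ^ 2 - v_s ^ 2 + 2 * (u_max * p_s - u_min * p_e)) /
      (2 * (u_max - u_min)))
    (hnn : 0 ≤ v_s ^ 2 + 2 * u_max * (p_c - p_s))
    (hvc : v_c = Real.sqrt (v_s ^ 2 + 2 * u_max * (p_c - p_s)))
    (hvcs : v_s ≤ v_c) (hvce : v_e ≤ v_c)
    (hR : R = (v_c - v_s) / u_max + (v_e - v_c) / u_min) :
    ∀ (t_s t_e : ℝ), t_s < t_e →
      ∀ (p v : ℝ → ℝ),
        (∀ t ∈ Set.Icc t_s t_e, HasDerivAt p (v t) t) →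
        (∀ t ∈ Set.Icc t_s t_e, DifferentiableAt ℝ v t) →
        (∀ t ∈ Set.Icc t_s t_e, u_min ≤ deriv v t ∧ deriv v t ≤ u_max) →
        p t_s = p_s → v t_s = v_s → p t_e = p_e → v t_e = v_e →
        t_e - t_s ≥ R :=
  stmt_10_general u_max u_min hmax hmin p_s v_s p_e v_e hvs hve p_c v_c R hpc hnn hvc hvcs hvce hR
end

section
/- Let T_0 < T_1 be reals and let Δv and Δq be reals. Then there exist reals a and b such that the affine function u*(t) = a·t + b satisfies ∫_{T_0}^{T_1} u*(t) dt = Δv and ∫_{T_0}^{T_1} (T_1 − t)·u*(t) dt = Δq; and for every continuous function u : [T_0, T_1] → ℝ satisfying ∫_{T_0}^{T_1} u(t) dt = Δv and ∫_{T_0}^{T_1} (T_1 − t)·u(t) dt = Δq, one has ∫_{T_0}^{T_1} u(t)^2 dt ≥ ∫_{T_0}^{T_1} u*(t)^2 dt. -/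
/-!
Both constraints are linear functionals `u ↦ ∫ g u` with `g ∈ {1, T₁ - t}`, and an affine `u*`
lies in the span of these two weights. Hence `∫ u u*` is a combination of the two constraint
values, so it is the same for every admissible `u`, in particular `∫ u u* = ∫ u*²`. Then
`∫ u² - ∫ u*² = ∫ (u - u*)² ≥ 0`. An affine `u*` meeting the constraints exists because
the resulting 2 × 2 linear system in its coefficients is nonsingular when `T₀ ≠ T₁`.
-/

open intervalIntegral Set
open MeasureTheory (volume)

theorem integral_quadratic (c₂ c₁ c₀ T₀ T₁ : ℝ) :
    (∫ t in T₀..T₁, (c₂ * t ^ 2 + c₁ * t + c₀)) =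
      c₂ * (T₁ ^ 3 - T₀ ^ 3) / 3 + c₁ * (T₁ ^ 2 - T₀ ^ 2) / 2 + c₀ * (T₁ - T₀) := by
  have h₂ : IntervalIntegrable (fun t : ℝ => c₂ * t ^ 2) volume T₀ T₁ :=
    (by fun_prop : Continuous _).intervalIntegrable _ _
  have h₁ : IntervalIntegrable (fun t : ℝ => c₁ * t) volume T₀ T₁ :=
    (by fun_prop : Continuous _).intervalIntegrable _ _
  rw [integral_add (h₂.add h₁) intervalIntegrable_const, integral_add h₂ h₁,
    integral_const_mul, integral_const_mul, integral_pow, integral_id, integral_const,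
    smul_eq_mul]
  push_cast
  ring

theorem exists_affine_integral_eq_and_integral_sub_mul_eq {T₀ T₁ : ℝ} (hT : T₀ ≠ T₁)
    (Δv Δq : ℝ) :
    ∃ a b : ℝ, (∫ t in T₀..T₁, (a * t + b)) = Δv ∧
      (∫ t in T₀..T₁, (T₁ - t) * (a * t + b)) = Δq := by
  have hτ : T₁ - T₀ ≠ 0 := sub_ne_zero.mpr hT.symm
  -- Writing `u* = α (T₁ - t) + β` and `τ = T₁ - T₀`, the constraints read
  -- `α τ² / 2 + β τ = Δv` and `α τ³ / 3 + β τ² / 2 = Δq`.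
  set α := (12 * Δq - 6 * Δv * (T₁ - T₀)) / (T₁ - T₀) ^ 3 with hα
  set β := (4 * Δv * (T₁ - T₀) - 6 * Δq) / (T₁ - T₀) ^ 2 with hβ
  refine ⟨-α, α * T₁ + β, ?_, ?_⟩
  · have h := integral_quadratic 0 (-α) (α * T₁ + β) T₀ T₁
    simp only [zero_mul, zero_add] at h
    rw [h, hα, hβ]
    field_simp
    ring
  · have hexpand : (fun t => (T₁ - t) * (-α * t + (α * T₁ + β))) =
        fun t => α * t ^ 2 + -(2 * α * T₁ + β) * t + (α * T₁ + β) * T₁ := by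
      funext t
      ring
    rw [hexpand, integral_quadratic, hα, hβ]
    field_simp
    ring

theorem integral_mul_affine_eq {u : ℝ → ℝ} {T₀ T₁ : ℝ}
    (hu : IntervalIntegrable u volume T₀ T₁) (a b : ℝ) :
    (∫ t in T₀..T₁, u t * (a * t + b)) =
      -a * (∫ t in T₀..T₁, (T₁ - t) * u t) + (a * T₁ + b) * ∫ t in T₀..T₁, u t := by
  have hu' : IntervalIntegrable (fun t => (T₁ - t) * u t) volume T₀ T₁ :=
    hu.continuousOn_mul (by fun_prop)
  rw [← integral_const_mul, ← integral_const_mul,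
    ← integral_add (hu'.const_mul _) (hu.const_mul _)]
  congr 1 with t
  ring

theorem integral_sq_le_of_integral_mul_eq {u v : ℝ → ℝ} {T₀ T₁ : ℝ} (hT : T₀ ≤ T₁)
    (hu : ContinuousOn u (Icc T₀ T₁)) (hv : ContinuousOn v (Icc T₀ T₁))
    (huv : (∫ t in T₀..T₁, u t * v t) = ∫ t in T₀..T₁, v t * v t) :
    (∫ t in T₀..T₁, v t ^ 2) ≤ ∫ t in T₀..T₁, u t ^ 2 := by
  rw [← uIcc_of_le hT] at hu hv
  have huu : IntervalIntegrable (fun t => u t * u t) volume T₀ T₁ :=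
    (hu.mul hu).intervalIntegrable
  have huv' : IntervalIntegrable (fun t => u t * v t) volume T₀ T₁ :=
    (hu.mul hv).intervalIntegrable
  have hvv : IntervalIntegrable (fun t => v t * v t) volume T₀ T₁ :=
    (hv.mul hv).intervalIntegrable
  have hexpand : (∫ t in T₀..T₁, (u t - v t) ^ 2) =
      (∫ t in T₀..T₁, u t * u t) - 2 * (∫ t in T₀..T₁, u t * v t) +
        ∫ t in T₀..T₁, v t * v t := by
    rw [← integral_const_mul, ← integral_sub huu (huv'.const_mul 2),
      ← integral_add (huu.sub (huv'.const_mul 2)) hvv]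
    congr 1 with t
    ring
  have hnonneg : 0 ≤ ∫ t in T₀..T₁, (u t - v t) ^ 2 :=
    integral_nonneg hT fun t _ => sq_nonneg _
  simp only [sq]
  linarith

/-- Unconstrained solution of the energy minimization problem (Problem 4): among
all continuous controls meeting the two integral (boundary-state) constraints,
an affine control u*(t) = a·t + b exists meeting them and minimizes ∫ u². -/
theorem stmt_13
    (T₀ T₁ : ℝ) (hT : T₀ < T₁) (Δv Δq : ℝ) :
    ∃ a b : ℝ,
      (∫ t in T₀..T₁, (a * t + b)) = Δv ∧
      (∫ t in T₀..T₁, (T₁ - t) * (a * t + b)) = Δq ∧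
      ∀ u : ℝ → ℝ, ContinuousOn u (Set.Icc T₀ T₁) →
        (∫ t in T₀..T₁, u t) = Δv →
        (∫ t in T₀..T₁, (T₁ - t) * u t) = Δq →
        (∫ t in T₀..T₁, (u t) ^ 2) ≥ ∫ t in T₀..T₁, (a * t + b) ^ 2 := by
  obtain ⟨a, b, hv, hq⟩ := exists_affine_integral_eq_and_integral_sub_mul_eq hT.ne Δv Δq
  refine ⟨a, b, hv, hq, fun u hu huv huq => ?_⟩
  have hstar : Continuous fun t : ℝ => a * t + b := by fun_prop
  have hcross :
      (∫ t in T₀..T₁, u t * (a * t + b)) = ∫ t in T₀..T₁, (a * t + b) * (a * t + b) := by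
    rw [integral_mul_affine_eq (hu.intervalIntegrable_of_Icc hT.le),
      integral_mul_affine_eq (hstar.intervalIntegrable _ _), huv, huq, hv, hq]
  exact integral_sq_le_of_integral_mul_eq hT.le hu hstar.continuousOn hcross
end
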